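/- arXiv:1708.09763 — 2 statements merged into one kernel-verified Lean document; each statement's English description precedes it below -/
import Mathlib

section
/- Let F : ℝ → ℝ be twice differentiable with |F''(x)| ≤ L for all x. For real numbers φ^{n+1}, φ^n, φ^{n-1}, set φ̂ = (3/2)φ^n - (1/2)φ^{n-1}, δ_t = φ^{n+1} - φ^n, δ_t' = φ^n - φ^{n-1}, δ_tt = φ^{n+1} - 2φ^n + φ^{n-1}. Then F(φ^{n+1}) - F(φ^n) - F'(φ̂)·δ_t ≤ (L/4)(δ_t² + δ_tt²) + (L/4)(δ_t')². -/
/-!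
Expanding `F` to first order around the extrapolated point `c = φ̂`, the sharp Taylor bound
`|F y - F c - F' c (y - c)| ≤ (L / 2) (y - c)²` applied at `y = φ^{n+1}` and `y = φ^n` bounds the
left-hand side by `(L / 2) ((φ^{n+1} - c)² + (φ^n - c)²)`. Since `φ^{n+1} - c = (δ_t + δ_tt) / 2`
and `φ^n - c = -δ_t' / 2`, the claim follows from `(a + b)² ≤ 2 (a² + b²)`.
-/

open Set

section LipschitzDeriv

variable {f f' : ℝ → ℝ} {L : ℝ}

theorem abs_sub_sub_deriv_mul_le_of_le (hf : ∀ t, HasDerivAt f (f' t) t)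
    (hf' : ∀ s t, |f' t - f' s| ≤ L * |t - s|) {x y : ℝ} (hxy : x ≤ y) :
    |f y - f x - f' x * (y - x)| ≤ L / 2 * (y - x) ^ 2 := by
  have hg : ∀ t, HasDerivAt (fun t => f t - f x - f' x * (t - x)) (f' t - f' x) t := fun t =>
    (((hf t).sub_const (f x)).fun_sub
      (((hasDerivAt_id' t).sub_const x).const_mul (f' x))).congr_deriv (by ring)
  have hB : ∀ t, HasDerivAt (fun t => L / 2 * (t - x) ^ 2) (L * (t - x)) t := fun t =>
    ((((hasDerivAt_id' t).sub_const x).fun_pow 2).const_mul (L / 2)).congr_deriv (by ring)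
  refine image_norm_le_of_norm_deriv_right_le_deriv_boundary
    (fun t _ => (hg t).continuousAt.continuousWithinAt) (fun t _ => (hg t).hasDerivWithinAt)
    (by simp) hB (fun t ht => ?_) ⟨hxy, le_rfl⟩
  simpa [abs_of_nonneg (sub_nonneg.2 ht.1)] using hf' x t

theorem abs_sub_sub_deriv_mul_le (hf : ∀ t, HasDerivAt f (f' t) t)
    (hf' : ∀ s t, |f' t - f' s| ≤ L * |t - s|) (x y : ℝ) :
    |f y - f x - f' x * (y - x)| ≤ L / 2 * (y - x) ^ 2 := by
  rcases le_total x y with hxy | hyx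
  · exact abs_sub_sub_deriv_mul_le_of_le hf hf' hxy
  · have hfn : ∀ t, HasDerivAt (fun t => f (-t)) (-f' (-t)) t := fun t =>
      ((hf (-t)).comp t (hasDerivAt_neg t)).congr_deriv (by ring)
    have hfn' : ∀ s t, |-f' (-t) - -f' (-s)| ≤ L * |t - s| := fun s t => by
      simpa [abs_sub_comm, neg_add_eq_sub] using hf' (-t) (-s)
    have := abs_sub_sub_deriv_mul_le_of_le hfn hfn' (neg_le_neg hyx)
    simp only [neg_neg] at this
    convert this using 2 <;> ring

theorem sub_sub_deriv_mul_le (hf : ∀ t, HasDerivAt f (f' t) t)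
    (hf' : ∀ s t, |f' t - f' s| ≤ L * |t - s|) (c y z : ℝ) :
    f y - f z - f' c * (y - z) ≤ L / 2 * ((y - c) ^ 2 + (z - c) ^ 2) := by
  have hy := (abs_le.1 (abs_sub_sub_deriv_mul_le hf hf' c y)).2
  have hz := (abs_le.1 (abs_sub_sub_deriv_mul_le hf hf' c z)).1
  linarith

end LipschitzDeriv

theorem abs_deriv_sub_le_of_abs_deriv_deriv_le {F : ℝ → ℝ} {L : ℝ}
    (hF' : Differentiable ℝ (deriv F)) (hL : ∀ x, |deriv (deriv F) x| ≤ L) (s t : ℝ) :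
    |deriv F t - deriv F s| ≤ L * |t - s| := by
  simpa using Convex.norm_image_sub_le_of_norm_deriv_le (fun x _ => hF' x) (fun x _ => hL x)
    convex_univ (mem_univ s) (mem_univ t)

theorem stmt2 (F : ℝ → ℝ) (L : ℝ)
    (hF : Differentiable ℝ F) (hF' : Differentiable ℝ (deriv F))
    (hL : ∀ x, |deriv (deriv F) x| ≤ L)
    (φ1 φ0 φm : ℝ) :
    F φ1 - F φ0 - deriv F ((3 / 2) * φ0 - (1 / 2) * φm) * (φ1 - φ0) ≤
      (L / 4) * ((φ1 - φ0) ^ 2 + (φ1 - 2 * φ0 + φm) ^ 2) + (L / 4) * (φ0 - φm) ^ 2 := by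
  have hL₀ : 0 ≤ L := (abs_nonneg _).trans (hL 0)
  have htaylor := sub_sub_deriv_mul_le (fun t => (hF t).hasDerivAt)
    (abs_deriv_sub_le_of_abs_deriv_deriv_le hF' hL) ((3 / 2) * φ0 - (1 / 2) * φm) φ1 φ0
  nlinarith [mul_nonneg hL₀ (sq_nonneg ((φ1 - φ0) - (φ1 - 2 * φ0 + φm))),
    mul_nonneg hL₀ (sq_nonneg (φ0 - φm))]
end

section
/- Let F : ℝ → ℝ be twice differentiable with |F''(x)| ≤ L for all x. For real numbers φ^{n+1}, φ^n, φ^{n-1}, set φ̂ = 2φ^n - φ^{n-1}, δ_t = φ^{n+1} - φ^n, δ_t' = φ^n - φ^{n-1}, δ_tt = φ^{n+1} - 2φ^n + φ^{n-1}. Then F(φ^{n+1}) - F(φ^n) - F'(φ̂)·δ_t ≤ (L/2)·δ_tt² + (L/2)·(δ_t')². -/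
/-!
First-order Taylor bound: if `f'` is `L`-Lipschitz (e.g. `|f''| ≤ L`) then
`|f b - f a - f' a (b - a)| ≤ L/2 (b - a)²`. Expanding both `F φ1` and `F φ0` about the
extrapolated point `φ̂ = 2 φ0 - φm` and subtracting, the first-order terms combine into
`F' φ̂ (φ1 - φ0)`, while the remainders are controlled by `(φ1 - φ̂)² = δ_tt²` and
`(φ0 - φ̂)² = δ_t'²`.
-/

theorem abs_sub_le_of_abs_deriv_le {f : ℝ → ℝ} {L : ℝ} (hf : Differentiable ℝ f)
    (hL : ∀ x, |deriv f x| ≤ L) (x y : ℝ) : |f x - f y| ≤ L * |x - y| :=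
  convex_univ.norm_image_sub_le_of_norm_deriv_le (fun z _ => hf z) (fun z _ => hL z)
    (Set.mem_univ y) (Set.mem_univ x)

section LipschitzDeriv

variable {f f' : ℝ → ℝ} {L : ℝ}

theorem sub_sub_mul_le_of_lipschitz_deriv (hf : ∀ x, HasDerivAt f (f' x) x)
    (hf' : ∀ x y, |f' x - f' y| ≤ L * |x - y|) (a b : ℝ) :
    f b - f a - f' a * (b - a) ≤ L / 2 * (b - a) ^ 2 := by
  -- `g` is the remainder along the segment `t ↦ a + t (b - a)`, minus its claimed bound.
  set g : ℝ → ℝ := fun t =>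
    f (a + t * (b - a)) - f' a * (t * (b - a)) - L / 2 * t ^ 2 * (b - a) ^ 2
  have hg : ∀ t, HasDerivAt g
      ((f' (a + t * (b - a)) - f' a) * (b - a) - L * t * (b - a) ^ 2) t := by
    intro t
    have hline : HasDerivAt (fun t : ℝ => a + t * (b - a)) (b - a) t := by
      simpa using ((hasDerivAt_id t).mul_const (b - a)).const_add a
    refine ((((hf _).comp t hline).sub
      (((hasDerivAt_id t).mul_const (b - a)).const_mul (f' a))).sub
      (((hasDerivAt_pow 2 t).const_mul (L / 2)).mul_const ((b - a) ^ 2))).congr_deriv ?_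
    simp only [Nat.cast_ofNat]
    ring
  have hg_le : ∀ t, 0 < t →
      (f' (a + t * (b - a)) - f' a) * (b - a) ≤ L * t * (b - a) ^ 2 := by
    intro t ht
    have hlip := hf' (a + t * (b - a)) a
    rw [show a + t * (b - a) - a = t * (b - a) by ring, abs_mul, abs_of_pos ht] at hlip
    calc (f' (a + t * (b - a)) - f' a) * (b - a)
        ≤ |f' (a + t * (b - a)) - f' a| * |b - a| := by rw [← abs_mul]; exact le_abs_self _
      _ ≤ L * (t * |b - a|) * |b - a| := by gcongr
      _ = L * t * (b - a) ^ 2 := by rw [← sq_abs (b - a)]; ring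
  have hanti : AntitoneOn g (Set.Ici 0) := by
    refine antitoneOn_of_hasDerivWithinAt_nonpos (convex_Ici 0)
      (fun t _ => (hg t).continuousAt.continuousWithinAt) (fun t _ => (hg t).hasDerivWithinAt) ?_
    rw [interior_Ici]
    exact fun t ht => sub_nonpos.mpr (hg_le t ht)
  have h := hanti Set.self_mem_Ici (Set.mem_Ici.mpr zero_le_one) zero_le_one
  simp only [g] at h
  norm_num at h
  linarith

theorem abs_sub_sub_mul_le_of_lipschitz_deriv (hf : ∀ x, HasDerivAt f (f' x) x)
    (hf' : ∀ x y, |f' x - f' y| ≤ L * |x - y|) (a b : ℝ) :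
    |f b - f a - f' a * (b - a)| ≤ L / 2 * (b - a) ^ 2 := by
  have hneg := sub_sub_mul_le_of_lipschitz_deriv (f := -f) (f' := -f') (fun x => (hf x).neg)
    (fun x y => by simpa only [Pi.neg_apply, neg_sub_neg, abs_sub_comm] using hf' x y) a b
  simp only [Pi.neg_apply] at hneg
  exact abs_le.mpr ⟨by linarith, sub_sub_mul_le_of_lipschitz_deriv hf hf' a b⟩

end LipschitzDeriv

theorem stmt3 (F : ℝ → ℝ) (L : ℝ)
    (hF : Differentiable ℝ F) (hF' : Differentiable ℝ (deriv F))
    (hL : ∀ x, |deriv (deriv F) x| ≤ L)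
    (φ1 φ0 φm : ℝ) :
    F φ1 - F φ0 - deriv F (2 * φ0 - φm) * (φ1 - φ0) ≤
      (L / 2) * (φ1 - 2 * φ0 + φm) ^ 2 + (L / 2) * (φ0 - φm) ^ 2 := by
  have hderiv : ∀ x, HasDerivAt F (deriv F x) x := fun x => (hF x).hasDerivAt
  have hlip := abs_sub_le_of_abs_deriv_le hF' hL
  have h1 := abs_le.mp (abs_sub_sub_mul_le_of_lipschitz_deriv hderiv hlip (2 * φ0 - φm) φ1)
  have h0 := abs_le.mp (abs_sub_sub_mul_le_of_lipschitz_deriv hderiv hlip (2 * φ0 - φm) φ0)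
  linear_combination h1.2 + h0.1
end
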